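/- arXiv:1305.1775 — 2 statements merged into one kernel-verified Lean document; each statement's English description precedes it below -/
import Mathlib

section
/- Let a₁ : V₁ × V₁ → ℂ and a₂ : V₂ × V₂ → ℂ be continuous elliptic sesquilinear forms with associated operators A₁, A₂. If Φ ∈ L(H₁,H₂) satisfies Φ(V₁) ⊆ V₂, Φ*(V₂) ⊆ V₁, and a₂(Φu, v) = a₁(u, Φ*v) for all u ∈ V₁, v ∈ V₂, then Φ(D(A₁)) ⊆ D(A₂) and A₂Φu = ΦA₁u for all u ∈ D(A₁). -/
open ContinuousLinearMap

/-!
If `g ∈ H₁` represents `a₁(u, ·)` through `J₁`, then `Φg` represents `a₂(Φu, ·)` through `J₂`: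
for `v ∈ V₂` the intertwining relation gives `a₂(Φu, v) = a₁(u, Φ*v) = ⟪Φ*v, g⟫ = ⟪v, Φg⟫`.
Hence `Φu ∈ D(A₂)`, and since representatives are unique when `J₂` has dense range,
`A₂Φu = ΦA₁u`.
-/

section FormRepresents

variable {𝕜 V H : Type*} [RCLike 𝕜] [NormedAddCommGroup H] [InnerProductSpace 𝕜 H]

/-- For the operator `A` associated with `a` this says `J u ∈ D(A)` and `A (J u) = g`. -/
def FormRepresents (J : V → H) (a : V → V → 𝕜) (u : V) (g : H) : Prop :=
  ∀ v, a u v = inner 𝕜 (J v) g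

theorem FormRepresents.unique {J : V → H} {a : V → V → 𝕜} {u : V} {g g' : H}
    (hJ : DenseRange J) (hg : FormRepresents J a u g) (hg' : FormRepresents J a u g') :
    g = g' :=
  hJ.eq_of_inner_right 𝕜 fun v => (hg v).symm.trans (hg' v)

theorem FormRepresents.map {V₁ V₂ H₁ H₂ : Type*}
    [NormedAddCommGroup H₁] [InnerProductSpace 𝕜 H₁] [CompleteSpace H₁]
    [NormedAddCommGroup H₂] [InnerProductSpace 𝕜 H₂] [CompleteSpace H₂]
    {J₁ : V₁ → H₁} {J₂ : V₂ → H₂} {a₁ : V₁ → V₁ → 𝕜} {a₂ : V₂ → V₂ → 𝕜} {Φ : H₁ →L[𝕜] H₂}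
    (hΦsV : ∀ v, adjoint Φ (J₂ v) ∈ Set.range J₁)
    (hform : ∀ u v u' v', J₂ u' = Φ (J₁ u) → J₁ v' = adjoint Φ (J₂ v) → a₂ u' v = a₁ u v')
    {u : V₁} {u' : V₂} {g : H₁} (hu' : J₂ u' = Φ (J₁ u)) (hg : FormRepresents J₁ a₁ u g) :
    FormRepresents J₂ a₂ u' (Φ g) := by
  intro v
  obtain ⟨v', hv'⟩ := hΦsV v
  rw [hform u v u' v' hu' hv', hg v', hv', adjoint_inner_left]

end FormRepresents

theorem stmt2_general {H₁ H₂ V₁ V₂ : Type*}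
    [NormedAddCommGroup H₁] [InnerProductSpace ℂ H₁] [CompleteSpace H₁]
    [NormedAddCommGroup H₂] [InnerProductSpace ℂ H₂] [CompleteSpace H₂]
    [NormedAddCommGroup V₁] [InnerProductSpace ℂ V₁]
    [NormedAddCommGroup V₂] [InnerProductSpace ℂ V₂]
    (J₁ : V₁ →L[ℂ] H₁) (J₂ : V₂ →L[ℂ] H₂)
    (hdense₂ : DenseRange J₂)
    (a₁ : V₁ → V₁ → ℂ) (a₂ : V₂ → V₂ → ℂ)
    -- the associated operators: D(A) = {u ∈ V : ∃ f ∈ H, a(u,v) = (f,v)_H ∀ v ∈ V}, A u = f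
    (D₁ : Set H₁) (A₁ : H₁ → H₁) (D₂ : Set H₂) (A₂ : H₂ → H₂)
    (hD₁ : ∀ f : H₁, f ∈ D₁ ↔
      ∃ u : V₁, J₁ u = f ∧ ∃ g : H₁, ∀ v : V₁, a₁ u v = inner ℂ (J₁ v) g)
    (hA₁ : ∀ f ∈ D₁, ∀ u : V₁, J₁ u = f → ∀ v : V₁, a₁ u v = inner ℂ (J₁ v) (A₁ f))
    (hD₂ : ∀ f : H₂, f ∈ D₂ ↔
      ∃ u : V₂, J₂ u = f ∧ ∃ g : H₂, ∀ v : V₂, a₂ u v = inner ℂ (J₂ v) g)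
    (hA₂ : ∀ f ∈ D₂, ∀ u : V₂, J₂ u = f → ∀ v : V₂, a₂ u v = inner ℂ (J₂ v) (A₂ f))
    (Φ : H₁ →L[ℂ] H₂)
    -- Φ(V₁) ⊆ V₂ and Φ*(V₂) ⊆ V₁
    (hΦV : ∀ u : V₁, Φ (J₁ u) ∈ Set.range J₂)
    (hΦsV : ∀ v : V₂, adjoint Φ (J₂ v) ∈ Set.range J₁)
    -- a₂(Φ u, v) = a₁(u, Φ* v) for all u ∈ V₁, v ∈ V₂
    (hform : ∀ (u : V₁) (v : V₂) (u' : V₂) (v' : V₁),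
      J₂ u' = Φ (J₁ u) → J₁ v' = adjoint Φ (J₂ v) → a₂ u' v = a₁ u v') :
    ∀ f ∈ D₁, Φ f ∈ D₂ ∧ A₂ (Φ f) = Φ (A₁ f) := by
  intro f hf
  obtain ⟨u, rfl, -⟩ := (hD₁ f).mp hf
  obtain ⟨u', hu'⟩ := hΦV u
  have hrep : FormRepresents J₂ a₂ u' (Φ (A₁ (J₁ u))) :=
    FormRepresents.map hΦsV hform hu' (hA₁ _ hf u rfl)
  have hmem : Φ (J₁ u) ∈ D₂ := (hD₂ _).mpr ⟨u', hu', _, hrep⟩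
  exact ⟨hmem, FormRepresents.unique hdense₂ (hA₂ _ hmem u' hu') hrep⟩

/-- Let `a₁`, `a₂` be continuous elliptic sesquilinear forms on `V₁ ⊆ H₁`, `V₂ ⊆ H₂`
(the dense embeddings being `J₁`, `J₂`), with associated operators `A₁` (domain `D₁`) and
`A₂` (domain `D₂`).  If `Φ(V₁) ⊆ V₂`, `Φ*(V₂) ⊆ V₁` and `a₂(Φu, v) = a₁(u, Φ*v)` for all
`u ∈ V₁`, `v ∈ V₂`, then `Φ(D(A₁)) ⊆ D(A₂)` and `A₂ Φ u = Φ A₁ u` on `D(A₁)`. -/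
theorem stmt2 {H₁ H₂ V₁ V₂ : Type*}
    [NormedAddCommGroup H₁] [InnerProductSpace ℂ H₁] [CompleteSpace H₁]
    [NormedAddCommGroup H₂] [InnerProductSpace ℂ H₂] [CompleteSpace H₂]
    [NormedAddCommGroup V₁] [InnerProductSpace ℂ V₁] [CompleteSpace V₁]
    [NormedAddCommGroup V₂] [InnerProductSpace ℂ V₂] [CompleteSpace V₂]
    (J₁ : V₁ →L[ℂ] H₁) (J₂ : V₂ →L[ℂ] H₂)
    (hJ₁ : Function.Injective J₁) (hJ₂ : Function.Injective J₂)
    (hdense₁ : DenseRange J₁) (hdense₂ : DenseRange J₂)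
    (a₁ : V₁ → V₁ → ℂ) (a₂ : V₂ → V₂ → ℂ)
    -- sesquilinearity (linear in the first, conjugate-linear in the second argument)
    (hlin₁ : ∀ (c : ℂ) u u' v, a₁ (c • u + u') v = c * a₁ u v + a₁ u' v)
    (hconj₁ : ∀ (c : ℂ) u v v', a₁ u (c • v + v') = starRingEnd ℂ c * a₁ u v + a₁ u v')
    (hlin₂ : ∀ (c : ℂ) u u' v, a₂ (c • u + u') v = c * a₂ u v + a₂ u' v)
    (hconj₂ : ∀ (c : ℂ) u v v', a₂ u (c • v + v') = starRingEnd ℂ c * a₂ u v + a₂ u v')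
    -- continuity
    (hcont₁ : ∃ M : ℝ, ∀ u v, ‖a₁ u v‖ ≤ M * ‖u‖ * ‖v‖)
    (hcont₂ : ∃ M : ℝ, ∀ u v, ‖a₂ u v‖ ≤ M * ‖u‖ * ‖v‖)
    -- ellipticity : Re a(u,u) + ω ‖u‖²_H ≥ μ ‖u‖²_V
    (hell₁ : ∃ (ω μ : ℝ), 0 < μ ∧ ∀ u, μ * ‖u‖ ^ 2 ≤ (a₁ u u).re + ω * ‖J₁ u‖ ^ 2)
    (hell₂ : ∃ (ω μ : ℝ), 0 < μ ∧ ∀ u, μ * ‖u‖ ^ 2 ≤ (a₂ u u).re + ω * ‖J₂ u‖ ^ 2)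
    -- the associated operators: D(A) = {u ∈ V : ∃ f ∈ H, a(u,v) = (f,v)_H ∀ v ∈ V}, A u = f
    (D₁ : Set H₁) (A₁ : H₁ → H₁) (D₂ : Set H₂) (A₂ : H₂ → H₂)
    (hD₁ : ∀ f : H₁, f ∈ D₁ ↔
      ∃ u : V₁, J₁ u = f ∧ ∃ g : H₁, ∀ v : V₁, a₁ u v = inner ℂ (J₁ v) g)
    (hA₁ : ∀ f ∈ D₁, ∀ u : V₁, J₁ u = f → ∀ v : V₁, a₁ u v = inner ℂ (J₁ v) (A₁ f))
    (hD₂ : ∀ f : H₂, f ∈ D₂ ↔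
      ∃ u : V₂, J₂ u = f ∧ ∃ g : H₂, ∀ v : V₂, a₂ u v = inner ℂ (J₂ v) g)
    (hA₂ : ∀ f ∈ D₂, ∀ u : V₂, J₂ u = f → ∀ v : V₂, a₂ u v = inner ℂ (J₂ v) (A₂ f))
    (Φ : H₁ →L[ℂ] H₂)
    -- Φ(V₁) ⊆ V₂ and Φ*(V₂) ⊆ V₁
    (hΦV : ∀ u : V₁, Φ (J₁ u) ∈ Set.range J₂)
    (hΦsV : ∀ v : V₂, adjoint Φ (J₂ v) ∈ Set.range J₁)
    -- a₂(Φ u, v) = a₁(u, Φ* v) for all u ∈ V₁, v ∈ V₂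
    (hform : ∀ (u : V₁) (v : V₂) (u' : V₂) (v' : V₁),
      J₂ u' = Φ (J₁ u) → J₁ v' = adjoint Φ (J₂ v) → a₂ u' v = a₁ u v') :
    ∀ f ∈ D₁, Φ f ∈ D₂ ∧ A₂ (Φ f) = Φ (A₁ f) :=
  stmt2_general J₁ J₂ hdense₂ a₁ a₂ D₁ A₁ D₂ A₂ hD₁ hA₁ hD₂ hA₂ Φ hΦV hΦsV hform
end

section
/- Let A₁ and A₂ be self-adjoint operators on Hilbert spaces H₁ and H₂, bounded below, whose negatives generate semigroups S¹ and S². If there exists an invertible Φ ∈ L(H₁,H₂) with S²_t Φ = Φ S¹_t for all t > 0, then there exists a unitary U ∈ L(H₁,H₂) with U S¹_t = S²_t U for all t > 0. -/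
/-!
Polar decomposition. For invertible `Φ`, the operator `|Φ| = (Φ†Φ)^{1/2}` is invertible and
`U = Φ |Φ|⁻¹` is unitary, since `‖Φ y‖ = ‖|Φ| y‖`. If `Φ S¹ₜ = S²ₜ Φ` with both semigroups
self-adjoint, taking adjoints gives `Φ† S²ₜ = S¹ₜ Φ†`, so `S¹ₜ` commutes with `Φ†Φ`, hence with
its square root `|Φ|` and with `|Φ|⁻¹`; therefore `U S¹ₜ = Φ S¹ₜ |Φ|⁻¹ = S²ₜ U`.
-/

open Filter Set

/-- `-A` (with domain `D`) is the generator of the C₀-semigroup `S`. -/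
structure IsNegGeneratorOf {H : Type*} [NormedAddCommGroup H] [InnerProductSpace ℂ H]
    (S : ℝ → H →L[ℂ] H) (D : Set H) (A : H → H) : Prop where
  map_zero : S 0 = 1
  map_add : ∀ s t : ℝ, 0 ≤ s → 0 ≤ t → S (s + t) = (S s).comp (S t)
  cont : ∀ u : H, Continuous fun t : ℝ => S t u
  mem_iff : ∀ u : H, u ∈ D ↔
    ∃ v : H, Tendsto (fun t : ℝ => t⁻¹ • (u - S t u)) (nhdsWithin 0 (Ioi 0)) (nhds v)
  tendsto : ∀ u ∈ D, Tendsto (fun t : ℝ => t⁻¹ • (u - S t u)) (nhdsWithin 0 (Ioi 0)) (nhds (A u))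

section PolarDecomposition

open ContinuousLinearMap

variable {E F : Type*} [NormedAddCommGroup E] [InnerProductSpace ℂ E] [CompleteSpace E]
  [NormedAddCommGroup F] [InnerProductSpace ℂ F] [CompleteSpace F]

namespace ContinuousLinearMap

lemma adjoint_comp_self_nonneg (Φ : E →L[ℂ] F) : 0 ≤ adjoint Φ ∘L Φ :=
  (nonneg_iff_isPositive _).mpr (isPositive_adjoint_comp_self Φ)

lemma norm_sqrt_adjoint_comp_self_apply (Φ : E →L[ℂ] F) (x : E) :
    ‖CFC.sqrt (adjoint Φ ∘L Φ) x‖ = ‖Φ x‖ := by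
  set s := CFC.sqrt (adjoint Φ ∘L Φ)
  have hs : IsSelfAdjoint s := (CFC.sqrt_nonneg _).isSelfAdjoint
  have hss : s ∘L s = adjoint Φ ∘L Φ := CFC.sqrt_mul_sqrt_self _ Φ.adjoint_comp_self_nonneg
  have hinner : (inner ℂ (s x) (s x) : ℂ) = inner ℂ (Φ x) (Φ x) :=
    calc (inner ℂ (s x) (s x) : ℂ) = inner ℂ x ((s ∘L s) x) := by
          rw [comp_apply, ← adjoint_inner_right, hs.adjoint_eq]
      _ = inner ℂ (Φ x) (Φ x) := by rw [hss, comp_apply, adjoint_inner_right]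
  rw [norm_eq_sqrt_re_inner (𝕜 := ℂ), norm_eq_sqrt_re_inner (𝕜 := ℂ) (Φ x), hinner]

lemma commute_adjoint_comp_self_of_comp_eq {a : E →L[ℂ] E} {b : F →L[ℂ] F}
    (ha : IsSelfAdjoint a) (hb : IsSelfAdjoint b) {Φ : E →L[ℂ] F} (h : Φ ∘L a = b ∘L Φ) :
    Commute a (adjoint Φ ∘L Φ) := by
  have h' : adjoint Φ ∘L b = a ∘L adjoint Φ := by
    simpa only [adjoint_comp, ha.adjoint_eq, hb.adjoint_eq] using congrArg adjoint h.symm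
  calc a * (adjoint Φ ∘L Φ) = adjoint Φ ∘L b ∘L Φ := by rw [← comp_assoc, h']; rfl
    _ = adjoint Φ ∘L Φ ∘L a := by rw [h]
    _ = (adjoint Φ ∘L Φ) * a := (comp_assoc _ _ _).symm

end ContinuousLinearMap

namespace ContinuousLinearEquiv

lemma isUnit_adjoint_comp_self (Φ : E ≃L[ℂ] F) :
    IsUnit (adjoint (Φ : E →L[ℂ] F) ∘L (Φ : E →L[ℂ] F)) := by
  refine isUnit_iff_exists.mpr ⟨(Φ.symm : F →L[ℂ] E) ∘L adjoint (Φ.symm : F →L[ℂ] E), ?_, ?_⟩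
  · calc _ = adjoint (Φ : E →L[ℂ] F) ∘L ((Φ : E →L[ℂ] F) ∘L (Φ.symm : F →L[ℂ] E)) ∘L
          adjoint (Φ.symm : F →L[ℂ] E) := rfl
      _ = 1 := by simp [← adjoint_comp, one_def, adjoint_id]
  · calc _ = (Φ.symm : F →L[ℂ] E) ∘L (adjoint (Φ.symm : F →L[ℂ] E) ∘L adjoint (Φ : E →L[ℂ] F)) ∘L
          (Φ : E →L[ℂ] F) := rfl
      _ = 1 := by simp [← adjoint_comp, one_def, adjoint_id]

lemma isUnit_sqrt_adjoint_comp_self (Φ : E ≃L[ℂ] F) :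
    IsUnit (CFC.sqrt (adjoint (Φ : E →L[ℂ] F) ∘L (Φ : E →L[ℂ] F))) :=
  (CFC.isUnit_sqrt_iff _ (Φ : E →L[ℂ] F).adjoint_comp_self_nonneg).mpr Φ.isUnit_adjoint_comp_self

noncomputable def absUnit (Φ : E ≃L[ℂ] F) : (E →L[ℂ] E)ˣ :=
  Φ.isUnit_sqrt_adjoint_comp_self.unit

lemma coe_absUnit (Φ : E ≃L[ℂ] F) :
    (Φ.absUnit : E →L[ℂ] E) = CFC.sqrt (adjoint (Φ : E →L[ℂ] F) ∘L (Φ : E →L[ℂ] F)) :=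
  rfl

noncomputable def polarIsometry (Φ : E ≃L[ℂ] F) : E ≃ₗᵢ[ℂ] F where
  toLinearEquiv := ((unitsEquiv ℂ E Φ.absUnit).symm.trans Φ).toLinearEquiv
  norm_map' x := by
    change ‖(Φ : E →L[ℂ] F) ((↑Φ.absUnit⁻¹ : E →L[ℂ] E) x)‖ = ‖x‖
    rw [← norm_sqrt_adjoint_comp_self_apply, ← coe_absUnit, ← mul_apply_eq_comp, Units.mul_inv,
      one_apply_eq_self]

lemma polarIsometry_apply (Φ : E ≃L[ℂ] F) (x : E) :
    Φ.polarIsometry x = Φ ((↑Φ.absUnit⁻¹ : E →L[ℂ] E) x) :=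
  rfl

lemma polarIsometry_apply_of_commute (Φ : E ≃L[ℂ] F) {a : E →L[ℂ] E} {b : F →L[ℂ] F}
    (h : (Φ : E →L[ℂ] F) ∘L a = b ∘L Φ) (hc : Commute a (adjoint (Φ : E →L[ℂ] F) ∘L Φ))
    (x : E) : Φ.polarIsometry (a x) = b (Φ.polarIsometry x) := by
  have habs : Commute a Φ.absUnit := by
    rw [coe_absUnit, CFC.sqrt_eq_cfc]
    exact (hc.symm.cfc_nnreal _).symm
  rw [polarIsometry_apply, polarIsometry_apply, ← mul_apply_eq_comp,
    ← habs.units_inv_right.eq, mul_apply_eq_comp]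
  exact congr($h _)

end ContinuousLinearEquiv

end PolarDecomposition

theorem stmt5_general {H₁ H₂ : Type*}
    [NormedAddCommGroup H₁] [InnerProductSpace ℂ H₁] [CompleteSpace H₁]
    [NormedAddCommGroup H₂] [InnerProductSpace ℂ H₂] [CompleteSpace H₂]
    (S₁ : ℝ → H₁ →L[ℂ] H₁) (S₂ : ℝ → H₂ →L[ℂ] H₂)
    (hsa₁ : ∀ t : ℝ, 0 ≤ t → IsSelfAdjoint (S₁ t))
    (hsa₂ : ∀ t : ℝ, 0 ≤ t → IsSelfAdjoint (S₂ t))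
    (hΦ : ∃ Φ : H₁ ≃L[ℂ] H₂, ∀ t : ℝ, 0 < t → ∀ x : H₁, S₂ t (Φ x) = Φ (S₁ t x)) :
    ∃ U : H₁ ≃ₗᵢ[ℂ] H₂, ∀ t : ℝ, 0 < t → ∀ x : H₁, U (S₁ t x) = S₂ t (U x) := by
  obtain ⟨Φ, hΦ⟩ := hΦ
  refine ⟨Φ.polarIsometry, fun t ht => ?_⟩
  have hintertwine : (Φ : H₁ →L[ℂ] H₂) ∘L S₁ t = S₂ t ∘L Φ :=
    ContinuousLinearMap.ext fun x => (hΦ t ht x).symm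
  exact Φ.polarIsometry_apply_of_commute hintertwine <|
    ContinuousLinearMap.commute_adjoint_comp_self_of_comp_eq (hsa₁ t ht.le) (hsa₂ t ht.le)
      hintertwine

/-- Let `A₁`, `A₂` be self-adjoint operators, bounded below (so that each `S¹ₜ`, `S²ₜ` is
self-adjoint).  If some invertible `Φ` satisfies `S²ₜ Φ = Φ S¹ₜ` for all `t > 0`, then there
is a unitary `U` with `U S¹ₜ = S²ₜ U` for all `t > 0`. -/
theorem stmt5 {H₁ H₂ : Type*}
    [NormedAddCommGroup H₁] [InnerProductSpace ℂ H₁] [CompleteSpace H₁]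
    [NormedAddCommGroup H₂] [InnerProductSpace ℂ H₂] [CompleteSpace H₂]
    (S₁ : ℝ → H₁ →L[ℂ] H₁) (S₂ : ℝ → H₂ →L[ℂ] H₂)
    (D₁ : Set H₁) (A₁ : H₁ → H₁) (D₂ : Set H₂) (A₂ : H₂ → H₂)
    (hgen₁ : IsNegGeneratorOf S₁ D₁ A₁) (hgen₂ : IsNegGeneratorOf S₂ D₂ A₂)
    (hsa₁ : ∀ t : ℝ, 0 ≤ t → IsSelfAdjoint (S₁ t))
    (hsa₂ : ∀ t : ℝ, 0 ≤ t → IsSelfAdjoint (S₂ t))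
    (hbb₁ : ∃ c : ℝ, ∀ u ∈ D₁, c * ‖u‖ ^ 2 ≤ (inner ℂ (A₁ u) u : ℂ).re)
    (hbb₂ : ∃ c : ℝ, ∀ u ∈ D₂, c * ‖u‖ ^ 2 ≤ (inner ℂ (A₂ u) u : ℂ).re)
    (hΦ : ∃ Φ : H₁ ≃L[ℂ] H₂, ∀ t : ℝ, 0 < t → ∀ x : H₁, S₂ t (Φ x) = Φ (S₁ t x)) :
    ∃ U : H₁ ≃ₗᵢ[ℂ] H₂, ∀ t : ℝ, 0 < t → ∀ x : H₁, U (S₁ t x) = S₂ t (U x) :=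
  stmt5_general S₁ S₂ hsa₁ hsa₂ hΦ
end
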